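/- The clocked λ-calculus reduction is (finitarily) confluent: if M ↠c N₁ and M ↠c N₂ then there exists P with N₁ ↠c P and N₂ ↠c P. -/

import Mathlib

/-!
Tait–Martin-Löf's method with Takahashi's complete developments. Parallel reduction `Par`
contains one clocked step and is contained in `CStar`, so its reflexive–transitive closure is
`CStar`. Every parallel reduct of `M` reduces in parallel to the complete development `dev M`,
which therefore closes any peak of `Par`; the diamond property of `Par` then tiles to
confluence of its closure.
-/

/-- clocked λ-terms: λ-terms with an extra unary constructor τ -/
inductive CLam : Type
  | var : Nat → CLam
  | app : CLam → CLam → CLam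
  | lam : CLam → CLam
  | tau : CLam → CLam
deriving DecidableEq

namespace CLam

def lift (d : Nat) : CLam → CLam
  | var n => if n < d then var n else var (n+1)
  | app M N => app (lift d M) (lift d N)
  | lam M => lam (lift (d+1) M)
  | tau M => tau (lift d M)

def subst (k : Nat) (N : CLam) : CLam → CLam
  | var n => if n = k then N else if k < n then var (n-1) else var n
  | app A B => app (subst k N A) (subst k N B)
  | lam A => lam (subst (k+1) (lift 0 N) A)
  | tau A => tau (subst k N A)

/-- one-step clocked reduction: compatible closure of
    (λ.M)N → τ(M[0:=N]) and (τ M)N → τ(M N) -/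
inductive CStep : CLam → CLam → Prop
  | beta (M N : CLam) : CStep (app (lam M) N) (tau (subst 0 N M))
  | tauApp (M N : CLam) : CStep (app (tau M) N) (tau (app M N))
  | appL {M M'} (N) : CStep M M' → CStep (app M N) (app M' N)
  | appR (M) {N N'} : CStep N N' → CStep (app M N) (app M N')
  | lam {M M'} : CStep M M' → CStep (lam M) (lam M')
  | tau {M M'} : CStep M M' → CStep (tau M) (tau M')

abbrev CStar : CLam → CLam → Prop := Relation.ReflTransGen CStep

/-- n-fold τ -/
def tauN : Nat → CLam → CLam
  | 0, M => M
  | n+1, M => tau (tauN n M)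


theorem lift_lift_of_le {i j : Nat} (h : i ≤ j) (M : CLam) :
    lift i (lift j M) = lift (j + 1) (lift i M) := by
  induction M generalizing i j with
  | var n => grind [lift]
  | app A B ihA ihB => simp [lift, ihA h, ihB h]
  | lam A ih => simp [lift, ih (Nat.succ_le_succ h)]
  | tau A ih => simp [lift, ih h]

theorem subst_lift (k : Nat) (N M : CLam) : subst k N (lift k M) = M := by
  induction M generalizing k N with
  | var n => grind [lift, subst]
  | app A B ihA ihB => simp [lift, subst, ihA, ihB]
  | lam A ih => simp [lift, subst, ih]
  | tau A ih => simp [lift, subst, ih]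

theorem lift_subst_of_le {d k : Nat} (h : d ≤ k) (N M : CLam) :
    lift d (subst k N M) = subst (k + 1) (lift d N) (lift d M) := by
  induction M generalizing d k N with
  | var n => grind [lift, subst]
  | app A B ihA ihB => simp [lift, subst, ihA h, ihB h]
  | lam A ih => simp [lift, subst, ih (Nat.succ_le_succ h), lift_lift_of_le (Nat.zero_le d)]
  | tau A ih => simp [lift, subst, ih h]

theorem lift_subst_of_ge {d k : Nat} (h : k ≤ d) (N M : CLam) :
    lift d (subst k N M) = subst k (lift d N) (lift (d + 1) M) := by
  induction M generalizing d k N with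
  | var n => grind [lift, subst]
  | app A B ihA ihB => simp [lift, subst, ihA h, ihB h]
  | lam A ih => simp [lift, subst, ih (Nat.succ_le_succ h), lift_lift_of_le (Nat.zero_le d)]
  | tau A ih => simp [lift, subst, ih h]

theorem subst_subst_of_le {j k : Nat} (h : j ≤ k) (N A M : CLam) :
    subst k N (subst j A M) = subst j (subst k N A) (subst (k + 1) (lift j N) M) := by
  induction M generalizing j k N A with
  | var n => grind [subst, subst_lift]
  | app B C ihB ihC => simp [subst, ihB h, ihC h]
  | lam B ih =>
      simp [subst, ih (Nat.succ_le_succ h), lift_subst_of_le (Nat.zero_le k),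
        lift_lift_of_le (Nat.zero_le j)]
  | tau B ih => simp [subst, ih h]

inductive Par : CLam → CLam → Prop
  | var (n) : Par (var n) (var n)
  | app {M M' N N'} : Par M M' → Par N N' → Par (app M N) (app M' N')
  | lam {M M'} : Par M M' → Par (lam M) (lam M')
  | tau {M M'} : Par M M' → Par (tau M) (tau M')
  | beta {M M' N N'} : Par M M' → Par N N' → Par (app (lam M) N) (tau (subst 0 N' M'))
  | tauApp {M M' N N'} : Par M M' → Par N N' → Par (app (tau M) N) (tau (app M' N'))

theorem Par.refl : ∀ M, Par M M
  | .var n => .var n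
  | .app M N => .app (Par.refl M) (Par.refl N)
  | .lam M => .lam (Par.refl M)
  | .tau M => .tau (Par.refl M)

theorem Par.lift {M M' : CLam} (h : Par M M') (d : Nat) : Par (lift d M) (lift d M') := by
  induction h generalizing d with
  | var n => exact .refl _
  | app _ _ ihM ihN => exact .app (ihM d) (ihN d)
  | lam _ ih => exact .lam (ih (d + 1))
  | tau _ ih => exact .tau (ih d)
  | beta _ _ ihM ihN =>
      simpa [CLam.lift, lift_subst_of_ge (Nat.zero_le d)] using Par.beta (ihM (d + 1)) (ihN d)
  | tauApp _ _ ihM ihN => exact .tauApp (ihM d) (ihN d)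

theorem Par.subst {M M' N N' : CLam} (hM : Par M M') (hN : Par N N') (k : Nat) :
    Par (subst k N M) (subst k N' M') := by
  induction hM generalizing k N N' with
  | var n =>
      simp only [CLam.subst]
      split_ifs
      · exact hN
      all_goals exact .refl _
  | app _ _ ihA ihB => exact .app (ihA hN k) (ihB hN k)
  | lam _ ih => exact .lam (ih (hN.lift 0) (k + 1))
  | tau _ ih => exact .tau (ih hN k)
  | beta _ _ ihA ihB =>
      simpa [CLam.subst, subst_subst_of_le (Nat.zero_le k)] using
        Par.beta (ihA (hN.lift 0) (k + 1)) (ihB hN k)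
  | tauApp _ _ ihA ihB => exact .tauApp (ihA hN k) (ihB hN k)

def dev : CLam → CLam
  | var n => var n
  | app (lam M) N => tau (subst 0 (dev N) (dev M))
  | app (tau M) N => tau (app (dev M) (dev N))
  | app M N => app (dev M) (dev N)
  | lam M => lam (dev M)
  | tau M => tau (dev M)

theorem Par.par_dev {M N : CLam} (h : Par M N) : Par N (dev M) := by
  induction h with
  | var n => exact .refl _
  | @app M M' N N' hM hN ihM ihN =>
      cases hM with
      | var n => exact .app ihM ihN
      | app => exact .app ihM ihN
      | lam => cases ihM with | lam h => exact .beta h ihN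
      | tau => cases ihM with | tau h => exact .tauApp h ihN
      | beta => exact .app ihM ihN
      | tauApp => exact .app ihM ihN
  | lam _ ih => exact .lam ih
  | tau _ ih => exact .tau ih
  | beta _ _ ihM ihN => exact .tau (ihM.subst ihN 0)
  | tauApp _ _ ihM ihN => exact .tau (.app ihM ihN)

theorem CStep.par {M N : CLam} (h : CStep M N) : Par M N := by
  induction h with
  | beta M N => exact .beta (.refl M) (.refl N)
  | tauApp M N => exact .tauApp (.refl M) (.refl N)
  | appL N _ ih => exact .app ih (.refl N)
  | appR M _ ih => exact .app (.refl M) ih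
  | lam _ ih => exact .lam ih
  | tau _ ih => exact .tau ih

theorem cStar_app {M M' N N' : CLam} (hM : CStar M M') (hN : CStar N N') :
    CStar (app M N) (app M' N') :=
  (hM.lift (app · N) fun _ _ => .appL N).trans (hN.lift (app M') fun _ _ => .appR M')

theorem cStar_lam {M M' : CLam} (h : CStar M M') : CStar (lam M) (lam M') :=
  h.lift lam fun _ _ => .lam

theorem cStar_tau {M M' : CLam} (h : CStar M M') : CStar (tau M) (tau M') :=
  h.lift tau fun _ _ => .tau

theorem Par.cStar {M N : CLam} (h : Par M N) : CStar M N := by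
  induction h with
  | var n => exact .refl
  | app _ _ ihM ihN => exact cStar_app ihM ihN
  | lam _ ih => exact cStar_lam ih
  | tau _ ih => exact cStar_tau ih
  | beta _ _ ihM ihN => exact (cStar_app (cStar_lam ihM) ihN).tail (.beta _ _)
  | tauApp _ _ ihM ihN => exact (cStar_app (cStar_tau ihM) ihN).tail (.tauApp _ _)

theorem reflTransGen_par_eq_cStar : Relation.ReflTransGen Par = CStar :=
  le_antisymm (Relation.reflTransGen_closed fun _ _ => Par.cStar)
    (Relation.ReflTransGen.mono fun _ _ => CStep.par)

theorem par_diamond {M N₁ N₂ : CLam} (h₁ : Par M N₁) (h₂ : Par M N₂) :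
    ∃ P, Par N₁ P ∧ Par N₂ P :=
  ⟨dev M, h₁.par_dev, h₂.par_dev⟩

end CLam

open CLam

theorem clocked_confluent :
    ∀ M N₁ N₂ : CLam, CStar M N₁ → CStar M N₂ →
      ∃ P : CLam, CStar N₁ P ∧ CStar N₂ P := by
  intro M N₁ N₂ h₁ h₂
  rw [← reflTransGen_par_eq_cStar] at h₁ h₂ ⊢
  refine Relation.church_rosser (fun _ _ _ hb hc => ?_) h₁ h₂
  obtain ⟨P, hbP, hcP⟩ := par_diamond hb hc
  exact ⟨P, .single hbP, .single hcP⟩
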